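/- arXiv:1902.10881 — 8 statements merged into one kernel-verified Lean document; each statement's English description precedes it below -/
import Mathlib

section
/- If T is the double star T(n_1, n_2) with n_1 ≥ n_2 ≥ 1, whose two adjacent center vertices have degrees n_1+1 and n_2+1 respectively, then cfc(T) = n_1 + 1 = Δ(T). -/
open SimpleGraph

/-- An edge coloring makes `G` conflict-free connected if every pair of distinct
vertices is joined by a path on which some color appears on exactly one edge. -/
def IsCFConnColoring {V : Type*} (G : SimpleGraph V) (c : Sym2 V → ℕ) : Prop :=
  ∀ u v : V, u ≠ v → ∃ p : G.Walk u v, p.IsPath ∧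
    ∃ col : ℕ, (p.edges.filter (fun e => c e = col)).length = 1

/-- The conflict-free connection number of `G`. -/
noncomputable def cfConn {V : Type*} (G : SimpleGraph V) : ℕ :=
  sInf {k | ∃ c : Sym2 V → ℕ, (∀ e ∈ G.edgeSet, c e < k) ∧ IsCFConnColoring G c}

/-- The double star `T(n₁, n₂)`: two adjacent centers `Sum.inl 0` and `Sum.inr 0`,
the first attached to `n₁` leaves and the second to `n₂` leaves. -/
def doubleStar (n₁ n₂ : ℕ) : SimpleGraph (Fin (n₁ + 1) ⊕ Fin (n₂ + 1)) where
  Adj x y := x ≠ y ∧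
    match x, y with
    | Sum.inl a, Sum.inl b => a = 0 ∨ b = 0
    | Sum.inr a, Sum.inr b => a = 0 ∨ b = 0
    | Sum.inl a, Sum.inr b => a = 0 ∧ b = 0
    | Sum.inr a, Sum.inl b => a = 0 ∧ b = 0
  symm := by
    refine ⟨?_⟩
    intro x y h
    refine ⟨h.1.symm, ?_⟩
    have h2 := h.2
    rcases x with a | a <;> rcases y with b | b <;> simp_all <;> tauto
  loopless := by refine ⟨?_⟩; intro x h; exact h.1 rfl

noncomputable instance (n₁ n₂ : ℕ) : DecidableRel (doubleStar n₁ n₂).Adj :=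
  Classical.decRel _

/-!
In a forest the only path between two neighbours `x`, `y` of a vertex `w` is `x - w - y`, so a
conflict-free colouring gives the edges at `w` pairwise distinct colours and needs at least `Δ`
colours. For the double star `n₁ + 1` colours suffice: colour each pendant edge by the index of its
leaf and the central edge by `0`. A path inside one star has at most two edges, at distinct
leaves, and a path through the central edge sees colour `0` exactly once.
-/

namespace SimpleGraph

variable {V : Type*} {G : SimpleGraph V} {c : Sym2 V → ℕ} {u v w x y : V}

theorem isBridge_of_forall_adj_leaving {S : Set V} (hv : v ∈ S) (hw : w ∉ S)
    (hS : ∀ x y, G.Adj x y → x ∈ S → y ∉ S → x = v ∧ y = w) : G.IsBridge s(v, w) := by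
  refine isBridge_iff_forall_walk_mem_edges.mpr fun p => ?_
  obtain ⟨d, hd, hdS, hdS'⟩ := p.exists_boundary_dart S hv hw
  obtain ⟨hx, hy⟩ := hS _ _ d.adj hdS hdS'
  have : d.edge = s(v, w) := by rw [Dart.edge, hx, hy]
  exact this ▸ List.mem_map_of_mem (f := Dart.edge) hd

theorem isBridge_of_forall_adj_eq (hvw : v ≠ w) (hw : ∀ x, G.Adj x w → x = v) :
    G.IsBridge s(v, w) :=
  isBridge_of_forall_adj_leaving (S := {w}ᶜ) hvw (by simp) fun x y h _ hy =>
    have hy : y = w := by simpa using hy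
    ⟨hw x (hy ▸ h), hy⟩

def CFJoined (G : SimpleGraph V) (c : Sym2 V → ℕ) (u v : V) : Prop :=
  ∃ p : G.Walk u v, p.IsPath ∧ ∃ col : ℕ, (p.edges.filter (fun e => c e = col)).length = 1

theorem CFJoined.symm (h : G.CFJoined c u v) : G.CFJoined c v u := by
  obtain ⟨p, hp, col, hcol⟩ := h
  refine ⟨p.reverse, hp.reverse, col, ?_⟩
  rwa [Walk.edges_reverse, List.filter_reverse, List.length_reverse]

theorem cfJoined_of_adj (h : G.Adj u v) : G.CFJoined c u v :=
  ⟨.cons h .nil, by simp [Walk.isPath_def, h.ne], c s(u, v), by simp⟩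

theorem cfJoined_of_adj_of_adj (h₁ : G.Adj u w) (h₂ : G.Adj w v) (huv : u ≠ v)
    (hc : c s(u, w) ≠ c s(w, v)) : G.CFJoined c u v :=
  ⟨.cons h₁ (.cons h₂ .nil), by simp [Walk.isPath_def, h₁.ne, h₂.ne, huv], c s(u, w),
    by simp [hc.symm]⟩

theorem cfJoined_of_adj_of_adj_of_adj (h₁ : G.Adj u w) (h₂ : G.Adj w x) (h₃ : G.Adj x v)
    (huv : u ≠ v) (hux : u ≠ x) (hwv : w ≠ v)
    (hc₁ : c s(u, w) ≠ c s(w, x)) (hc₃ : c s(x, v) ≠ c s(w, x)) : G.CFJoined c u v :=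
  ⟨.cons h₁ (.cons h₂ (.cons h₃ .nil)),
    by simp [Walk.isPath_def, h₁.ne, h₂.ne, h₃.ne, huv, hux, hwv], c s(w, x),
    by simp [hc₁, hc₃]⟩

theorem IsAcyclic.apply_ne_of_isCFConnColoring (hG : G.IsAcyclic) (hc : IsCFConnColoring G c)
    (hx : G.Adj w x) (hy : G.Adj w y) (hxy : x ≠ y) : c s(w, x) ≠ c s(w, y) := by
  obtain ⟨p, hp, col, hcol⟩ := hc x y hxy
  have hq : (Walk.cons hx.symm (Walk.cons hy .nil)).IsPath := by
    simp [Walk.isPath_def, hx.ne.symm, hy.ne, hxy]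
  obtain rfl : p = _ := congrArg Subtype.val ((hG.subsingleton_path x y).elim ⟨p, hp⟩ ⟨_, hq⟩)
  intro heq
  simp only [Walk.edges_cons, Walk.edges_nil, Sym2.eq_swap (a := x)] at hcol
  by_cases h : c s(w, y) = col <;> simp [h, heq] at hcol

theorem IsAcyclic.degree_le_of_isCFConnColoring (hG : G.IsAcyclic) (hc : IsCFConnColoring G c)
    {k : ℕ} (hk : ∀ e ∈ G.edgeSet, c e < k) (w : V) [Fintype (G.neighborSet w)] :
    G.degree w ≤ k := by
  rw [← card_neighborFinset_eq_degree]
  calc (G.neighborFinset w).card ≤ (Finset.range k).card :=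
        Finset.card_le_card_of_injOn (fun x => c s(w, x))
          (fun x hx => Finset.mem_range.mpr (hk _ ((mem_neighborFinset ..).mp hx)))
          fun x hx y hy hxy => by
            by_contra hne
            exact hG.apply_ne_of_isCFConnColoring hc ((mem_neighborFinset ..).mp hx)
              ((mem_neighborFinset ..).mp hy) hne hxy
    _ = k := Finset.card_range k

theorem IsAcyclic.maxDegree_le_cfConn [Fintype V] [DecidableRel G.Adj] (hG : G.IsAcyclic)
    (hc : IsCFConnColoring G c) {k : ℕ} (hk : ∀ e ∈ G.edgeSet, c e < k) :
    G.maxDegree ≤ cfConn G :=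
  le_csInf ⟨k, c, hk, hc⟩ fun _ ⟨_, hk', hc'⟩ =>
    maxDegree_le_of_forall_degree_le _ _ fun w => hG.degree_le_of_isCFConnColoring hc' hk' w

end SimpleGraph

open Sum

section DoubleStar

variable {n₁ n₂ : ℕ}

@[simp]
theorem doubleStar_adj_inl_inl {a b : Fin (n₁ + 1)} :
    (doubleStar n₁ n₂).Adj (inl a) (inl b) ↔ a ≠ b ∧ (a = 0 ∨ b = 0) := by
  simp [doubleStar]

@[simp]
theorem doubleStar_adj_inr_inr {a b : Fin (n₂ + 1)} :
    (doubleStar n₁ n₂).Adj (inr a) (inr b) ↔ a ≠ b ∧ (a = 0 ∨ b = 0) := by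
  simp [doubleStar]

@[simp]
theorem doubleStar_adj_inl_inr {a : Fin (n₁ + 1)} {b : Fin (n₂ + 1)} :
    (doubleStar n₁ n₂).Adj (inl a) (inr b) ↔ a = 0 ∧ b = 0 := by
  simp [doubleStar]

@[simp]
theorem doubleStar_adj_inr_inl {a : Fin (n₂ + 1)} {b : Fin (n₁ + 1)} :
    (doubleStar n₁ n₂).Adj (inr a) (inl b) ↔ a = 0 ∧ b = 0 := by
  simp [doubleStar]

theorem eq_inl_zero_of_doubleStar_adj {a : Fin (n₁ + 1)} (ha : a ≠ 0) {x}
    (h : (doubleStar n₁ n₂).Adj x (inl a)) : x = inl 0 := by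
  rcases x with b | b <;> simp_all

theorem eq_inr_zero_of_doubleStar_adj {a : Fin (n₂ + 1)} (ha : a ≠ 0) {x}
    (h : (doubleStar n₁ n₂).Adj x (inr a)) : x = inr 0 := by
  rcases x with b | b <;> simp_all

theorem isAcyclic_doubleStar : (doubleStar n₁ n₂).IsAcyclic := by
  have center : (doubleStar n₁ n₂).IsBridge s(inl 0, inr 0) :=
    isBridge_of_forall_adj_leaving (S := Set.range inl) (by simp) (by simp) <| by
      rintro (a | a) (b | b) <;> simp_all
  refine isAcyclic_iff_forall_adj_isBridge.mpr ?_
  rintro (a | a) (b | b) h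
  · obtain ⟨hab, rfl | rfl⟩ := doubleStar_adj_inl_inl.mp h
    · exact isBridge_of_forall_adj_eq (by simpa using hab)
        fun x hx => eq_inl_zero_of_doubleStar_adj hab.symm hx
    · rw [Sym2.eq_swap]
      exact isBridge_of_forall_adj_eq (by simpa using hab.symm)
        fun x hx => eq_inl_zero_of_doubleStar_adj hab hx
  · obtain ⟨rfl, rfl⟩ := doubleStar_adj_inl_inr.mp h
    exact center
  · obtain ⟨rfl, rfl⟩ := doubleStar_adj_inr_inl.mp h
    rw [Sym2.eq_swap]
    exact center
  · obtain ⟨hab, rfl | rfl⟩ := doubleStar_adj_inr_inr.mp h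
    · exact isBridge_of_forall_adj_eq (by simpa using hab)
        fun x hx => eq_inr_zero_of_doubleStar_adj hab.symm hx
    · rw [Sym2.eq_swap]
      exact isBridge_of_forall_adj_eq (by simpa using hab.symm)
        fun x hx => eq_inr_zero_of_doubleStar_adj hab hx

theorem degree_doubleStar_inl_zero : (doubleStar n₁ n₂).degree (inl 0) = n₁ + 1 := by
  have : (doubleStar n₁ n₂).neighborFinset (inl 0) =
      insert (inr 0) ((Finset.univ.erase 0).map .inl) := by
    ext (b | b) <;> simp [eq_comm]
  rw [← card_neighborFinset_eq_degree, this, Finset.card_insert_of_notMem (by simp),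
    Finset.card_map, Finset.card_erase_of_mem (Finset.mem_univ _), Finset.card_univ,
    Fintype.card_fin, Nat.add_sub_cancel]

theorem degree_doubleStar_inr_zero : (doubleStar n₁ n₂).degree (inr 0) = n₂ + 1 := by
  have : (doubleStar n₁ n₂).neighborFinset (inr 0) =
      insert (inl 0) ((Finset.univ.erase 0).map .inr) := by
    ext (b | b) <;> simp [eq_comm]
  rw [← card_neighborFinset_eq_degree, this, Finset.card_insert_of_notMem (by simp),
    Finset.card_map, Finset.card_erase_of_mem (Finset.mem_univ _), Finset.card_univ,
    Fintype.card_fin, Nat.add_sub_cancel]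

theorem degree_doubleStar_inl_of_ne_zero {a : Fin (n₁ + 1)} (ha : a ≠ 0) :
    (doubleStar n₁ n₂).degree (inl a) = 1 :=
  degree_eq_one_iff_existsUnique_adj.mpr
    ⟨inl 0, by simpa using ha, fun _ h => eq_inl_zero_of_doubleStar_adj ha h.symm⟩

theorem degree_doubleStar_inr_of_ne_zero {a : Fin (n₂ + 1)} (ha : a ≠ 0) :
    (doubleStar n₁ n₂).degree (inr a) = 1 :=
  degree_eq_one_iff_existsUnique_adj.mpr
    ⟨inr 0, by simpa using ha, fun _ h => eq_inr_zero_of_doubleStar_adj ha h.symm⟩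

theorem maxDegree_doubleStar (h : n₂ ≤ n₁) : (doubleStar n₁ n₂).maxDegree = n₁ + 1 := by
  refine le_antisymm (maxDegree_le_of_forall_degree_le _ _ ?_)
    (degree_doubleStar_inl_zero.symm.trans_le (degree_le_maxDegree _ _))
  rintro (a | a) <;> rcases eq_or_ne a 0 with rfl | ha
  · rw [degree_doubleStar_inl_zero]
  · rw [degree_doubleStar_inl_of_ne_zero ha]; omega
  · rw [degree_doubleStar_inr_zero]; omega
  · rw [degree_doubleStar_inr_of_ne_zero ha]; omega

-- Every edge has a centre (index `0`) as an endpoint, so this is the index of its leaf, or `0` on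
-- the central edge.
def doubleStarColoring (n₁ n₂ : ℕ) : Sym2 (Fin (n₁ + 1) ⊕ Fin (n₂ + 1)) → ℕ :=
  Sym2.lift ⟨fun x y => Sum.elim Fin.val Fin.val x + Sum.elim Fin.val Fin.val y,
    fun _ _ => Nat.add_comm _ _⟩

@[simp]
theorem doubleStarColoring_mk (x y : Fin (n₁ + 1) ⊕ Fin (n₂ + 1)) :
    doubleStarColoring n₁ n₂ s(x, y) = Sum.elim Fin.val Fin.val x + Sum.elim Fin.val Fin.val y :=
  rfl

theorem doubleStarColoring_lt (h : n₂ ≤ n₁) :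
    ∀ e ∈ (doubleStar n₁ n₂).edgeSet, doubleStarColoring n₁ n₂ e < n₁ + 1 := by
  refine Sym2.ind fun x y hxy => ?_
  rcases x with a | a <;> rcases y with b | b <;> simp at hxy ⊢ <;> grind

theorem isCFConnColoring_doubleStarColoring :
    IsCFConnColoring (doubleStar n₁ n₂) (doubleStarColoring n₁ n₂) := by
  have cross (a : Fin (n₁ + 1)) (b : Fin (n₂ + 1)) :
      (doubleStar n₁ n₂).CFJoined (doubleStarColoring n₁ n₂) (inl a) (inr b) := by
    rcases eq_or_ne a 0 with rfl | ha <;> rcases eq_or_ne b 0 with rfl | hb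
    · exact cfJoined_of_adj (by simp)
    · exact cfJoined_of_adj_of_adj (w := inr 0) (by simp) (by simpa using hb.symm) (by simp)
        (by simpa [eq_comm] using hb)
    · exact cfJoined_of_adj_of_adj (w := inl 0) (by simpa using ha) (by simp) (by simp)
        (by simpa using ha)
    · exact cfJoined_of_adj_of_adj_of_adj (w := inl 0) (x := inr 0) (by simpa using ha) (by simp)
        (by simpa using hb.symm) (by simp) (by simp) (by simp)
        (by simpa using ha) (by simpa using hb)
  rintro (a | a) (b | b) hab
  · have hab : a ≠ b := by simpa using hab
    rcases eq_or_ne a 0 with rfl | ha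
    · exact cfJoined_of_adj (by simpa using hab)
    rcases eq_or_ne b 0 with rfl | hb
    · exact cfJoined_of_adj (by simpa using hab)
    exact cfJoined_of_adj_of_adj (w := inl 0) (by simpa using ha) (by simpa using hb.symm)
      (by simpa using hab) (by simpa [Fin.val_inj] using hab)
  · exact cross a b
  · exact (cross b a).symm
  · have hab : a ≠ b := by simpa using hab
    rcases eq_or_ne a 0 with rfl | ha
    · exact cfJoined_of_adj (by simpa using hab)
    rcases eq_or_ne b 0 with rfl | hb
    · exact cfJoined_of_adj (by simpa using hab)
    exact cfJoined_of_adj_of_adj (w := inr 0) (by simpa using ha) (by simpa using hb.symm)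
      (by simpa using hab) (by simpa [Fin.val_inj] using hab)

end DoubleStar

theorem cfConn_doubleStar_general (n₁ n₂ : ℕ) (h₁ : n₂ ≤ n₁) :
    cfConn (doubleStar n₁ n₂) = n₁ + 1 ∧
    (doubleStar n₁ n₂).maxDegree = n₁ + 1 := by
  have hΔ := maxDegree_doubleStar h₁
  have hc := isCFConnColoring_doubleStarColoring (n₁ := n₁) (n₂ := n₂)
  have hk := doubleStarColoring_lt h₁
  refine ⟨le_antisymm (Nat.sInf_le ⟨_, hk, hc⟩) ?_, hΔ⟩
  exact hΔ.symm.trans_le (isAcyclic_doubleStar.maxDegree_le_cfConn hc hk)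

/-- For the double star `T(n₁, n₂)` with `n₁ ≥ n₂ ≥ 1`, whose two adjacent centers
have degrees `n₁ + 1` and `n₂ + 1`, we have `cfc(T) = n₁ + 1 = Δ(T)`. -/
theorem cfConn_doubleStar (n₁ n₂ : ℕ) (h₂ : 1 ≤ n₂) (h₁ : n₂ ≤ n₁) :
    cfConn (doubleStar n₁ n₂) = n₁ + 1 ∧
    (doubleStar n₁ n₂).maxDegree = n₁ + 1 :=
  cfConn_doubleStar_general n₁ n₂ h₁
end

section
/- Necessity direction of the tuple lemma: Let r be a positive integer and (s_1,…,s_r) a tuple of nonnegative integers with s_1 ≥ s_2 ≥ … ≥ s_r. Suppose there exists a sequence of distinct ordered pairs from [r] × [r] such that: each pair has distinct components, no two pairs (i,j) and (j,i) both appear, and for each i exactly s_i pairs have first component i. Then for every j with 1 ≤ j ≤ r, s_1 + s_2 + … + s_j ≤ j(2r − 1 − j)/2. -/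
/-- `(s 0, …, s (r-1))` is realizable as the sequence of numbers of pairs with a given
first coordinate, for a collection of distinct ordered pairs from `[r] × [r]` with
distinct components containing at most one of `(i,j)` and `(j,i)` for each `i,j`
(equivalently, `s` is the out-degree sequence of an orientation of a simple
subgraph of the complete graph `K r`). -/
def HasOutDegSeq (r : ℕ) (s : ℕ → ℕ) : Prop :=
  ∃ P : Finset (ℕ × ℕ),
    (∀ p ∈ P, p.1 < r ∧ p.2 < r ∧ p.1 ≠ p.2) ∧
    (∀ p ∈ P, (p.2, p.1) ∉ P) ∧
    (∀ i < r, (P.filter (fun p => p.1 = i)).card = s i)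

/-! Among the pairs whose first coordinate lies in a set `S` of `j` vertices, those with both
coordinates in `S` contain at most one of `(i, i')` and `(i', i)`, so there are at most
`j(j-1)/2` of them, and the others end in one of the `r - j` remaining vertices, so there are
at most `j(r-j)` of them. Hence `s` sums to at most `j(j-1)/2 + j(r-j) = j(2r-1-j)/2` over `S`,
in particular over `S = {0, …, j-1}`. -/

open Finset

lemma mul_self_sub_add_two_mul_mul_sub {k n : ℕ} (h : k ≤ n) :
    k * k - k + 2 * (k * (n - k)) = k * (2 * n - 1 - k) := by
  obtain ⟨t, rfl⟩ := Nat.exists_eq_add_of_le h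
  rcases k with _ | m
  · simp
  · have e1 : (m + 1) * (m + 1) - (m + 1) = (m + 1) * m := by
      rw [Nat.mul_succ, Nat.add_sub_cancel]
    have e2 : 2 * (m + 1 + t) - 1 - (m + 1) = m + 2 * t := by omega
    rw [e1, e2, Nat.add_sub_cancel_left]
    ring

section Orientation

variable {α : Type*} [DecidableEq α] {P : Finset (α × α)}

lemma two_mul_card_le_card_offDiag_of_asymm {S : Finset α} (hPS : P ⊆ S.offDiag)
    (hasymm : ∀ p ∈ P, p.swap ∉ P) : 2 * #P ≤ #S.offDiag := by
  have hdisj : Disjoint P (P.image Prod.swap) := by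
    rw [disjoint_left]
    intro _ hp hp'
    obtain ⟨q, hq, rfl⟩ := mem_image.mp hp'
    exact hasymm q hq hp
  have hswap : P.image Prod.swap ⊆ S.offDiag := by
    intro _ hp
    obtain ⟨q, hq, rfl⟩ := mem_image.mp hp
    have := mem_offDiag.mp (hPS hq)
    exact mem_offDiag.mpr ⟨this.2.1, this.1, this.2.2.symm⟩
  calc 2 * #P = #(P ∪ P.image Prod.swap) := by
        rw [card_union_of_disjoint hdisj, card_image_of_injective _ Prod.swap_injective, two_mul]
    _ ≤ #S.offDiag := card_le_card (union_subset hPS hswap)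

lemma card_filter_fst_mem_not_snd_mem_le {V S : Finset α} (hPV : P ⊆ V.offDiag) (hSV : S ⊆ V) :
    #{p ∈ P | p.1 ∈ S ∧ p.2 ∉ S} ≤ #S * (#V - #S) := by
  calc #{p ∈ P | p.1 ∈ S ∧ p.2 ∉ S} ≤ #(S ×ˢ (V \ S)) := by
        refine card_le_card fun p hp => ?_
        obtain ⟨hpP, h1, h2⟩ := mem_filter.mp hp
        exact mem_product.mpr ⟨h1, mem_sdiff.mpr ⟨(mem_offDiag.mp (hPV hpP)).2.1, h2⟩⟩
    _ = #S * (#V - #S) := by rw [card_product, card_sdiff_of_subset hSV]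

theorem two_mul_card_filter_fst_mem_le {V S : Finset α} (hPV : P ⊆ V.offDiag)
    (hasymm : ∀ p ∈ P, p.swap ∉ P) (hSV : S ⊆ V) :
    2 * #{p ∈ P | p.1 ∈ S} ≤ #S * (2 * #V - 1 - #S) := by
  have hsplit : #{p ∈ P | p.1 ∈ S ∧ p.2 ∈ S} + #{p ∈ P | p.1 ∈ S ∧ p.2 ∉ S}
      = #{p ∈ P | p.1 ∈ S} := by
    rw [← card_filter_add_card_filter_not (s := {p ∈ P | p.1 ∈ S}) (fun p => p.2 ∈ S),
      filter_filter, filter_filter]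
  have hinside : 2 * #{p ∈ P | p.1 ∈ S ∧ p.2 ∈ S} ≤ #S * #S - #S := by
    rw [← offDiag_card]
    refine two_mul_card_le_card_offDiag_of_asymm (fun p hp => ?_)
      (fun p hp hswap => hasymm p (filter_subset _ _ hp) (filter_subset _ _ hswap))
    obtain ⟨hpP, h1, h2⟩ := mem_filter.mp hp
    exact mem_offDiag.mpr ⟨h1, h2, (mem_offDiag.mp (hPV hpP)).2.2⟩
  have houtside := card_filter_fst_mem_not_snd_mem_le hPV hSV
  calc 2 * #{p ∈ P | p.1 ∈ S}
      ≤ #S * #S - #S + 2 * (#S * (#V - #S)) := by omega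
    _ = #S * (2 * #V - 1 - #S) := mul_self_sub_add_two_mul_mul_sub (card_le_card hSV)

end Orientation

theorem hasOutDegSeq_partial_sums_general (r : ℕ) (s : ℕ → ℕ)
    (h : HasOutDegSeq r s) :
    ∀ j, 1 ≤ j → j ≤ r →
      2 * ∑ i ∈ Finset.range j, s i ≤ j * (2 * r - 1 - j) := by
  obtain ⟨P, hPr, hasymm, hdeg⟩ := h
  intro j _ hjr
  have hPV : P ⊆ (range r).offDiag := fun p hp => by
    simpa only [mem_offDiag, mem_range] using hPr p hp
  have hsum : ∑ i ∈ range j, s i = #{p ∈ P | p.1 ∈ range j} := by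
    rw [← sum_card_fiberwise_eq_card_filter]
    exact sum_congr rfl fun i hi => (hdeg i (lt_of_lt_of_le (mem_range.mp hi) hjr)).symm
  simpa only [hsum, card_range] using
    two_mul_card_filter_fst_mem_le hPV hasymm (range_subset_range.mpr hjr)

/-- Necessity in the tuple lemma: if a nonincreasing tuple of nonnegative integers
is realizable, then all its partial sums satisfy `s 0 + ⋯ + s (j-1) ≤ j(2r-1-j)/2`
(stated multiplied by `2`; note `j * (2r - 1 - j)` is always even). -/
theorem hasOutDegSeq_partial_sums (r : ℕ) (hr : 1 ≤ r) (s : ℕ → ℕ)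
    (hmono : ∀ i j, i ≤ j → j < r → s j ≤ s i)
    (h : HasOutDegSeq r s) :
    ∀ j, 1 ≤ j → j ≤ r →
      2 * ∑ i ∈ Finset.range j, s i ≤ j * (2 * r - 1 - j) :=
  hasOutDegSeq_partial_sums_general r s h
end

section
/- Sufficiency direction of the tuple lemma: Let r be a positive integer and (s_1,…,s_r) a tuple of nonnegative integers with s_1 ≥ s_2 ≥ … ≥ s_r. If for every j with 1 ≤ j ≤ r we have s_1 + … + s_j ≤ j(2r − 1 − j)/2, then there exists a collection of distinct ordered pairs from [r] × [r], each with distinct components, containing at most one of (i,j) and (j,i) for each pair {i,j}, such that for each i exactly s_i pairs have first coordinate i. -/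
open Finset

lemma sum_le_sum_range_card_of_antitoneOn {M : Type*} [AddCommMonoid M] [PartialOrder M]
    [IsOrderedAddMonoid M] {r : ℕ} {s : ℕ → M} (hs : AntitoneOn s (Set.Iio r))
    {A : Finset ℕ} (hA : A ⊆ range r) : ∑ i ∈ A, s i ≤ ∑ i ∈ range #A, s i := by
  induction A using Finset.induction_on_max with
  | empty => simp
  | insert a A hlt ih =>
    have ha : a ∉ A := fun h => (hlt a h).false
    have har : a < r := mem_range.1 (hA (mem_insert_self a A))
    have hcard : #A ≤ a := by simpa using card_le_card fun x hx => mem_range.2 (hlt x hx)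
    rw [sum_insert ha, card_insert_of_notMem ha, sum_range_succ, add_comm]
    exact add_le_add (ih ((subset_insert a A).trans hA))
      (hs (Set.mem_Iio.2 (hcard.trans_lt har)) (Set.mem_Iio.2 har) hcard)

lemma card_filter_not_disjoint_powersetCard_add_choose {α : Type*} [DecidableEq α]
    {A V : Finset α} (hA : A ⊆ V) (k : ℕ) :
    #{e ∈ V.powersetCard k | ¬Disjoint e A} + (#V - #A).choose k = (#V).choose k := by
  have hdisj : {e ∈ V.powersetCard k | Disjoint e A} = (V \ A).powersetCard k := by
    ext e
    simp only [mem_filter, mem_powersetCard, subset_sdiff]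
    tauto
  rw [← card_sdiff_of_subset hA, ← card_powersetCard, ← hdisj, ← card_powersetCard]
  simpa only [not_not] using card_filter_add_card_filter_not (s := V.powersetCard k)
    (fun e => ¬Disjoint e A)

lemma Nat.mul_two_mul_sub_one_sub_add_two_mul_choose_two {a r : ℕ} (h : a ≤ r) :
    a * (2 * r - 1 - a) + 2 * (r - a).choose 2 = 2 * r.choose 2 := by
  obtain ⟨b, rfl⟩ := Nat.exists_eq_add_of_le h
  rcases a with _ | c
  · simp
  · rw [show 2 * (c + 1 + b) - 1 - (c + 1) = c + 2 * b by omega, Nat.add_sub_cancel_left]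
    qify
    rw [Nat.cast_choose_two, Nat.cast_choose_two]
    push_cast
    ring

lemma card_filter_fst_val_eq {r : ℕ} {s : ℕ → ℕ} {i : ℕ} (hi : i < r) :
    #{x : Σ i : Fin r, Fin (s i) | (x.1 : ℕ) = i} = s i := by
  have hfiber : ({x : Σ i : Fin r, Fin (s i) | (x.1 : ℕ) = i} : Finset _)
      = (univ : Finset (Fin (s i))).map
        ⟨Sigma.mk (⟨i, hi⟩ : Fin r), sigma_mk_injective⟩ := by
    ext ⟨⟨k, hk⟩, c⟩
    simp only [mem_filter, mem_univ, true_and, mem_map, Function.Embedding.coeFn_mk]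
    constructor
    · rintro rfl
      exact ⟨c, rfl⟩
    · rintro ⟨c, hc⟩
      cases hc
      rfl
  simp [hfiber]

def incidentEdges (r i : ℕ) : Finset (Finset ℕ) :=
  {e ∈ (range r).powersetCard 2 | i ∈ e}

lemma card_le_card_biUnion_incidentEdges {r : ℕ} {s : ℕ → ℕ} (hs : AntitoneOn s (Set.Iio r))
    (h : ∀ j, 1 ≤ j → j ≤ r → 2 * ∑ i ∈ range j, s i ≤ j * (2 * r - 1 - j))
    (W : Finset (Σ i : Fin r, Fin (s i))) :
    #W ≤ #(W.biUnion fun x => incidentEdges r x.1) := by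
  set A := W.image fun x => (x.1 : ℕ)
  have hAr : A ⊆ range r := by
    intro i hi
    obtain ⟨x, -, rfl⟩ := mem_image.1 hi
    exact mem_range.2 x.1.isLt
  have hslots : #W ≤ ∑ i ∈ A, s i := by
    rw [card_eq_sum_card_image (fun x => (x.1 : ℕ)) W]
    refine sum_le_sum fun i hi => ?_
    calc #{x ∈ W | (x.1 : ℕ) = i} ≤ #{x : Σ i : Fin r, Fin (s i) | (x.1 : ℕ) = i} :=
          card_le_card (filter_subset_filter _ (subset_univ W))
      _ = s i := card_filter_fst_val_eq (mem_range.1 (hAr hi))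
  have hedges : W.biUnion (fun x => incidentEdges r x.1)
      = {e ∈ (range r).powersetCard 2 | ¬Disjoint e A} := by
    ext e
    simp only [incidentEdges, A, mem_biUnion, mem_filter, mem_image, not_disjoint_iff]
    aesop
  have hA : #A ≤ r := by simpa using card_le_card hAr
  have hcount := card_filter_not_disjoint_powersetCard_add_choose hAr 2
  have hmass : 2 * ∑ i ∈ A, s i ≤ #A * (2 * r - 1 - #A) := by
    rcases Nat.eq_zero_or_pos #A with h0 | hpos
    · simp [card_eq_zero.1 h0]
    · exact (Nat.mul_le_mul_left 2 (sum_le_sum_range_card_of_antitoneOn hs hAr)).trans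
        (h #A hpos hA)
  have harith := Nat.mul_two_mul_sub_one_sub_add_two_mul_choose_two hA
  rw [card_range] at hcount
  rw [hedges]
  omega

lemma Finset.exists_ne_eq_pair_of_card_eq_two {α : Type*} [DecidableEq α] {e : Finset α}
    {i : α} (he : #e = 2) (hi : i ∈ e) : ∃ j, j ≠ i ∧ e = {i, j} := by
  obtain ⟨x, y, hxy, rfl⟩ := card_eq_two.1 he
  rcases mem_insert.1 hi with rfl | hiy
  · exact ⟨y, hxy.symm, rfl⟩
  · obtain rfl := mem_singleton.1 hiy
    exact ⟨x, hxy, pair_comm _ _⟩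

lemma hasOutDegSeq_of_injective {r : ℕ} {s : ℕ → ℕ} (f : (Σ i : Fin r, Fin (s i)) → Finset ℕ)
    (hf : Function.Injective f) (hmem : ∀ x, f x ∈ incidentEdges r x.1) : HasOutDegSeq r s := by
  have hpair x : ∃ j < r, j ≠ x.1 ∧ f x = {(x.1 : ℕ), j} := by
    obtain ⟨hedge, hx⟩ := mem_filter.1 (hmem x)
    obtain ⟨hsub, hcard⟩ := mem_powersetCard.1 hedge
    obtain ⟨j, hji, hfj⟩ := exists_ne_eq_pair_of_card_eq_two hcard hx
    exact ⟨j, mem_range.1 (hsub (by simp [hfj])), hji, hfj⟩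
  choose j hjr hji hfj using hpair
  set g : (Σ i : Fin r, Fin (s i)) → ℕ × ℕ := fun x => (x.1, j x)
  have hg : Function.Injective g := fun x y hxy => hf <| by
    rw [hfj x, hfj y]
    simp_all [g]
  refine ⟨univ.image g, ?_, ?_, fun i hi => ?_⟩
  · simp only [mem_image, mem_univ, true_and, forall_exists_index]
    rintro _ x rfl
    exact ⟨x.1.isLt, hjr x, (hji x).symm⟩
  · simp only [mem_image, mem_univ, true_and, forall_exists_index]
    rintro _ x rfl ⟨y, hyx⟩
    have hxy : x = y := hf <| by
      rw [hfj x, hfj y, pair_comm]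
      simp_all [g]
    subst hxy
    exact hji x (congrArg Prod.fst hyx).symm
  · rw [filter_image, card_image_of_injective _ hg]
    exact card_filter_fst_val_eq hi

theorem hasOutDegSeq_of_partial_sums_general (r : ℕ) (s : ℕ → ℕ)
    (hmono : ∀ i j, i ≤ j → j < r → s j ≤ s i)
    (h : ∀ j, 1 ≤ j → j ≤ r →
      2 * ∑ i ∈ Finset.range j, s i ≤ j * (2 * r - 1 - j)) :
    HasOutDegSeq r s := by
  have hs : AntitoneOn s (Set.Iio r) := fun i _ j hj hij => hmono i j hij hj
  obtain ⟨f, hf, hmem⟩ := (all_card_le_biUnion_card_iff_exists_injective _).1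
    (card_le_card_biUnion_incidentEdges hs h)
  exact hasOutDegSeq_of_injective f hf hmem

/-- Sufficiency in the tuple lemma: a nonincreasing tuple of nonnegative integers all
of whose partial sums satisfy `s 0 + ⋯ + s (j-1) ≤ j(2r-1-j)/2` is realizable. -/
theorem hasOutDegSeq_of_partial_sums (r : ℕ) (hr : 1 ≤ r) (s : ℕ → ℕ)
    (hmono : ∀ i j, i ≤ j → j < r → s j ≤ s i)
    (h : ∀ j, 1 ≤ j → j ≤ r →
      2 * ∑ i ∈ Finset.range j, s i ≤ j * (2 * r - 1 - j)) :
    HasOutDegSeq r s :=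
  hasOutDegSeq_of_partial_sums_general r s hmono h
end

section
/- For every connected graph G, vcfc(G) ≤ rad(G) + 1, where rad(G) is the radius of G. -/
open SimpleGraph

/-- A vertex coloring makes `G` conflict-free vertex-connected if every pair of
distinct vertices is joined by a path on which some color appears on exactly one vertex. -/
def IsCFVertexConnColoring {V : Type*} (G : SimpleGraph V) (c : V → ℕ) : Prop :=
  ∀ u v : V, u ≠ v → ∃ p : G.Walk u v, p.IsPath ∧
    ∃ col : ℕ, (p.support.filter (fun x => c x = col)).length = 1

/-- The conflict-free vertex-connection number of `G`. -/
noncomputable def vcfConn {V : Type*} (G : SimpleGraph V) : ℕ :=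
  sInf {k | ∃ c : V → ℕ, (∀ v, c v < k) ∧ IsCFVertexConnColoring G c}

/-- The eccentricity of a vertex: its maximum distance to other vertices. -/
noncomputable def eccentricity {V : Type*} (G : SimpleGraph V) (v : V) : ℕ :=
  sSup {d | ∃ u : V, G.dist v u = d}

/-- The radius of a graph: the minimum eccentricity over its vertices. -/
noncomputable def graphRadius {V : Type*} (G : SimpleGraph V) : ℕ :=
  sInf {r | ∃ v : V, eccentricity G v = r}

/-!
Colour every vertex by its distance from a centre `v`, which uses `rad G + 1` colours. Given `u`
and `w`, take geodesics from `v` to each and a common vertex `x` of them farthest from `v`. Their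
tails beyond `x` meet only in `x`, so together they form a `u`–`w` path, and every vertex on it
other than `x` is strictly farther from `v` than `x`: the colour `dist v x` occurs exactly once.
-/

theorem List.length_filter_eq_one_of_nodup {α : Type*} [DecidableEq α] {l : List α}
    (hl : l.Nodup) {x : α} (hx : x ∈ l) {p : α → Prop} [DecidablePred p]
    (hp : ∀ y ∈ l, p y ↔ y = x) : (l.filter fun y => decide (p y)).length = 1 := by
  rw [List.filter_congr (q := (· == x)) fun y hy => decide_eq_decide.mpr (hp y hy),
    ← List.count_eq_length_filter]
  exact List.count_eq_one_of_mem hl hx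

namespace SimpleGraph.Walk

variable {V : Type*} {G : SimpleGraph V} {u v w x y : V}

theorem isPath_reverse_append {p : G.Walk x u} {q : G.Walk x w} (hp : p.IsPath) (hq : q.IsPath)
    (hpq : ∀ y ∈ p.support, y ∈ q.support → y = x) : (p.reverse.append q).IsPath := by
  have hq' := hq.support_nodup
  rw [← q.cons_tail_support, List.nodup_cons] at hq'
  rw [isPath_def, support_append, support_reverse, List.nodup_append]
  refine ⟨List.nodup_reverse.mpr hp.support_nodup, hq'.2, fun y hyp z hzq hyz => ?_⟩
  subst hyz
  obtain rfl := hpq y (List.mem_reverse.mp hyp) (List.mem_of_mem_tail hzq)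
  exact hq'.1 hzq

variable [DecidableEq V]

theorem dist_add_dist_eq_of_mem_support {p : G.Walk u v} (hp : p.length = G.dist u v)
    (hx : x ∈ p.support) : G.dist u x + G.dist x v = G.dist u v := by
  rw [← length_eq_dist_of_subwalk hp (p.isSubwalk_takeUntil hx),
    ← length_eq_dist_of_subwalk hp (p.isSubwalk_dropUntil hx), ← length_append, take_spec, hp]

theorem dist_lt_dist_of_mem_support_dropUntil {p : G.Walk u v} (hp : p.length = G.dist u v)
    (hx : x ∈ p.support) (hy : y ∈ (p.dropUntil x hx).support) (hyx : y ≠ x) :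
    G.dist u x < G.dist u y := by
  have hux := dist_add_dist_eq_of_mem_support hp hx
  have hxy := dist_add_dist_eq_of_mem_support
    (length_eq_dist_of_subwalk hp (p.isSubwalk_dropUntil hx)) hy
  have htri := (p.takeUntil y (p.support_dropUntil_subset_support hx hy)).reachable
    |>.dist_triangle_left v
  have hpos := ((p.dropUntil x hx).takeUntil y hy).reachable.pos_dist_of_ne hyx.symm
  -- `d(u,x) + d(x,y) + d(y,v) = d(u,v) ≤ d(u,y) + d(y,v)` with `d(x,y) > 0`
  omega

end SimpleGraph.Walk

theorem isCFVertexConnColoring_dist {V : Type*} {G : SimpleGraph V} (hconn : G.Connected)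
    (v : V) : IsCFVertexConnColoring G (G.dist v) := by
  classical
  intro u w _
  obtain ⟨P, hP⟩ := hconn.exists_walk_length_eq_dist v u
  obtain ⟨Q, hQ⟩ := hconn.exists_walk_length_eq_dist v w
  obtain ⟨x, hxPQ, hxmax⟩ := (P.support.toFinset ∩ Q.support.toFinset).exists_max_image
    (G.dist v) ⟨v, by simp⟩
  simp only [Finset.mem_inter, List.mem_toFinset, and_imp] at hxPQ hxmax
  obtain ⟨hxP, hxQ⟩ := hxPQ
  have hfarP : ∀ y ∈ (P.dropUntil x hxP).support, y ≠ x → G.dist v x < G.dist v y :=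
    fun _ => Walk.dist_lt_dist_of_mem_support_dropUntil hP hxP
  have hfarQ : ∀ y ∈ (Q.dropUntil x hxQ).support, y ≠ x → G.dist v x < G.dist v y :=
    fun _ => Walk.dist_lt_dist_of_mem_support_dropUntil hQ hxQ
  have hpath : ((P.dropUntil x hxP).reverse.append (Q.dropUntil x hxQ)).IsPath := by
    refine Walk.isPath_reverse_append ((P.isPath_of_length_eq_dist hP).dropUntil hxP)
      ((Q.isPath_of_length_eq_dist hQ).dropUntil hxQ) fun y hyP hyQ => ?_
    by_contra hyx
    exact (hfarP y hyP hyx).not_ge <| hxmax y (P.support_dropUntil_subset_support hxP hyP)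
      (Q.support_dropUntil_subset_support hxQ hyQ)
  refine ⟨_, hpath, G.dist v x, List.length_filter_eq_one_of_nodup hpath.support_nodup
    (by simp) fun y hy => ⟨fun hyx => by_contra fun hne => ?_, fun h => h ▸ rfl⟩⟩
  rw [Walk.mem_support_append_iff, Walk.support_reverse, List.mem_reverse] at hy
  rcases hy with hy | hy
  · exact (hfarP y hy hne).ne' hyx
  · exact (hfarQ y hy hne).ne' hyx

theorem exists_eccentricity_eq_graphRadius {V : Type*} [Nonempty V] (G : SimpleGraph V) :
    ∃ v, eccentricity G v = graphRadius G :=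
  Nat.sInf_mem (s := {r | ∃ v, eccentricity G v = r}) ⟨_, Classical.arbitrary V, rfl⟩

theorem dist_le_eccentricity {V : Type*} [Finite V] (G : SimpleGraph V) (v u : V) :
    G.dist v u ≤ eccentricity G v :=
  le_csSup (Set.finite_range (G.dist v)).bddAbove ⟨u, rfl⟩

theorem vcfConn_le_of_isCFVertexConnColoring {V : Type*} {G : SimpleGraph V} {c : V → ℕ}
    (hc : IsCFVertexConnColoring G c) {k : ℕ} (hk : ∀ v, c v < k) : vcfConn G ≤ k :=
  Nat.sInf_le ⟨c, hk, hc⟩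

/-- For every connected graph `G`, `vcfc(G) ≤ rad(G) + 1`. -/
theorem vcfConn_le_radius_add_one {V : Type*} [Fintype V] (G : SimpleGraph V)
    (hconn : G.Connected) : vcfConn G ≤ graphRadius G + 1 := by
  have := hconn.nonempty
  obtain ⟨v, hv⟩ := exists_eccentricity_eq_graphRadius G
  refine vcfConn_le_of_isCFVertexConnColoring (isCFVertexConnColoring_dist hconn v) fun u => ?_
  rw [← hv]
  exact Nat.lt_succ_of_le (dist_le_eccentricity G v u)
end

section
/- If G is a connected graph of diameter 2 on at least 3 vertices, then G has at most one cut-vertex, and consequently vcfc(G) = 2. -/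
/-!
In a graph of diameter at most two, nonadjacent vertices have a common neighbour. So if `x` misses
some vertex `w`, every other vertex reaches `w` in `G - x` within two steps: a cut-vertex `x` is
adjacent to all other vertices, and then `G - x'` stays connected through `x` for every `x' ≠ x`.

Colouring one vertex `w` with `1` and all others with `0` is conflict-free as soon as every two
distinct vertices are joined by a path through `w`. A cut-vertex, being dominating, is such a `w`.
Without cut-vertices every `w` is: if `u` and `v` both miss `w`, take common neighbours `a` of
`u, w` and `b` of `v, w`; either `u a w b v` is a path, or `a = b` and a path from `w` to `u`
in `G - a` can be rerouted through `a`. One colour never suffices: under a constant colouring,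
a path between distinct vertices shows its colour at least twice.
-/

open SimpleGraph

/-- `v` is a cut-vertex: deleting it disconnects the graph. -/
def IsCutVertex {V : Type*} (G : SimpleGraph V) (v : V) : Prop :=
  ¬ (G.induce {u | u ≠ v}).Connected

/-- `G` is 2-connected: it is connected and deleting any single vertex
leaves it connected. -/
def TwoConnected {V : Type*} (G : SimpleGraph V) : Prop :=
  G.Connected ∧ ∀ v : V, (G.induce {u | u ≠ v}).Connected

namespace SimpleGraph

variable {V : Type*} {G : SimpleGraph V}

lemma ediam_eq_of_diam_eq {n : ℕ} (hn : n ≠ 0) (h : G.diam = n) : G.ediam = n := by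
  rw [← ENat.natCast_toNat (G.ediam_ne_top_of_diam_ne_zero (h ▸ hn))]
  exact congrArg _ h

lemma exists_adj_adj_of_ediam_le_two (h : G.ediam ≤ 2) {u v : V} (hne : u ≠ v)
    (hadj : ¬ G.Adj u v) : ∃ a, G.Adj u a ∧ G.Adj a v := by
  have hle : G.edist u v ≤ 2 := G.edist_le_ediam.trans h
  have h0 : G.edist u v ≠ 0 := G.edist_eq_zero_iff.not.mpr hne
  have h1 : G.edist u v ≠ 1 := edist_eq_one_iff_adj.not.mpr hadj
  have h2 : G.edist u v = 2 := by
    lift G.edist u v to ℕ using ne_top_of_le_ne_top (by decide) hle with d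
    norm_cast at *
    omega
  obtain ⟨a, ha⟩ := (edist_eq_two_iff.mp h2).2.2
  exact ⟨a, (G.mem_commonNeighbors.mp ha).1, (G.mem_commonNeighbors.mp ha).2.symm⟩

lemma induce_ne_connected_of_forall_reachable {x w : V} (hw : w ≠ x)
    (h : ∀ z (hz : z ≠ x), (G.induce {u | u ≠ x}).Reachable ⟨z, hz⟩ ⟨w, hw⟩) :
    (G.induce {u | u ≠ x}).Connected :=
  (connected_iff_exists_forall_reachable _).mpr ⟨⟨w, hw⟩, fun ⟨z, hz⟩ => (h z hz).symm⟩

lemma induce_ne_connected_of_not_adj (h : G.ediam ≤ 2) {x w : V} (hw : w ≠ x)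
    (hxw : ¬ G.Adj x w) : (G.induce {u | u ≠ x}).Connected := by
  refine induce_ne_connected_of_forall_reachable hw fun z hz => ?_
  by_cases hzw : z = w
  · subst hzw; rfl
  by_cases hadj : G.Adj z w
  · exact Adj.reachable (induce_adj.mpr hadj)
  obtain ⟨a, hza, haw⟩ := exists_adj_adj_of_ediam_le_two h hzw hadj
  have hax : a ≠ x := by rintro rfl; exact hxw haw
  exact (Adj.reachable (G := G.induce {u | u ≠ x}) (v := ⟨a, hax⟩) (induce_adj.mpr hza)).trans
    (Adj.reachable (induce_adj.mpr haw))

lemma induce_ne_connected_of_forall_adj {x y : V} (hyx : y ≠ x) (hy : ∀ z ≠ y, G.Adj y z) :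
    (G.induce {u | u ≠ x}).Connected := by
  refine induce_ne_connected_of_forall_reachable hyx fun z hz => ?_
  by_cases hzy : z = y
  · subst hzy; rfl
  · exact Adj.reachable (induce_adj.mpr (hy z hzy).symm)

lemma exists_isPath_notMem_support {a u v : V} (h : (G.induce {x | x ≠ a}).Connected)
    (hu : u ≠ a) (hv : v ≠ a) : ∃ p : G.Walk u v, p.IsPath ∧ a ∉ p.support := by
  obtain ⟨q⟩ := h.preconnected ⟨u, hu⟩ ⟨v, hv⟩
  classical
  let f := (Embedding.induce (G := G) {x | x ≠ a}).toHom
  refine ⟨q.bypass.map f, q.bypass_isPath.map Subtype.val_injective, fun ha => ?_⟩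
  obtain ⟨y, -, hy⟩ := List.mem_map.mp (q.bypass.support_map _ ▸ ha)
  exact y.2 hy

lemma exists_isPath_mem_support_of_adj {u v w : V} (h : (G.induce {x | x ≠ u}).Connected)
    (huw : G.Adj u w) (hv : v ≠ u) : ∃ p : G.Walk u v, p.IsPath ∧ w ∈ p.support := by
  obtain ⟨q, hq, hu⟩ := exists_isPath_notMem_support h huw.ne' hv
  exact ⟨.cons huw q, hq.cons hu, by simp⟩

lemma exists_isPath_mem_support_of_common_adj {a u v w : V}
    (h : (G.induce {x | x ≠ a}).Connected) (hau : G.Adj a u) (hav : G.Adj a v)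
    (haw : G.Adj a w) (huv : u ≠ v) : ∃ p : G.Walk u v, p.IsPath ∧ w ∈ p.support := by
  classical
  obtain ⟨q, hq, ha⟩ := exists_isPath_notMem_support h haw.ne' hau.ne'
  by_cases hv : v ∈ q.support
  · have hu := Walk.endpoint_notMem_support_takeUntil hq hv huv
    have ha' : a ∉ (q.takeUntil v hv).support :=
      fun h' => ha (q.support_takeUntil_subset_support hv h')
    refine ⟨.cons hau.symm (.cons haw (q.takeUntil v hv)),
      ((hq.takeUntil hv).cons ha').cons ?_, by simp⟩
    simp [hau.ne', hu]
  · refine ⟨(q.reverse.concat haw.symm).concat hav, (hq.reverse.concat (by simpa) _).concat ?_ _,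
      by simp⟩
    simp [hav.ne', hv]

def IsPathHub (G : SimpleGraph V) (w : V) : Prop :=
  ∀ u v, u ≠ v → ∃ p : G.Walk u v, p.IsPath ∧ w ∈ p.support

lemma IsPathHub.of_forall_adj {x : V} (hx : ∀ w ≠ x, G.Adj x w) : G.IsPathHub x := by
  intro u v huv
  by_cases hux : u = x
  · subst hux
    exact ⟨.cons (hx v huv.symm) .nil, by simp [huv], by simp⟩
  by_cases hvx : v = x
  · subst hvx
    exact ⟨.cons (hx u hux).symm .nil, by simp [huv], by simp⟩
  exact ⟨.cons (hx u hux).symm (.cons (hx v hvx) .nil), by simp [hux, huv, Ne.symm hvx],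
    by simp⟩

lemma IsPathHub.of_not_isCutVertex (h : G.ediam ≤ 2) (hcut : ∀ x, ¬ IsCutVertex G x) (w : V) :
    G.IsPathHub w := by
  have h2 (x : V) : (G.induce {u | u ≠ x}).Connected := not_not.mp (hcut x)
  have near (u v : V) (huv : u ≠ v) (hu : u = w ∨ G.Adj u w) :
      ∃ p : G.Walk u v, p.IsPath ∧ w ∈ p.support := by
    rcases hu with rfl | huw
    · classical
      obtain ⟨p⟩ := preconnected_of_ediam_ne_top (ne_top_of_le_ne_top (by decide) h) u v
      exact ⟨p.bypass, p.bypass_isPath, p.bypass.start_mem_support⟩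
    · exact exists_isPath_mem_support_of_adj (h2 u) huw huv.symm
  intro u v huv
  by_cases hu : u = w ∨ G.Adj u w
  · exact near u v huv hu
  by_cases hv : v = w ∨ G.Adj v w
  · obtain ⟨p, hp, hw⟩ := near v u huv.symm hv
    exact ⟨p.reverse, hp.reverse, by simpa⟩
  push Not at hu hv
  obtain ⟨a, hua, haw⟩ := exists_adj_adj_of_ediam_le_two h hu.1 hu.2
  obtain ⟨b, hvb, hbw⟩ := exists_adj_adj_of_ediam_le_two h hv.1 hv.2
  by_cases hab : a = b
  · subst hab
    exact exists_isPath_mem_support_of_common_adj (h2 a) hua.symm hvb.symm haw huv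
  have hub : u ≠ b := by rintro rfl; exact hu.2 hbw
  have hav : a ≠ v := by rintro rfl; exact hv.2 haw
  refine ⟨.cons hua (.cons haw (.cons hbw.symm (.cons hvb.symm .nil))), ?_, by simp⟩
  simp [hua.ne, hu.1, hub, huv, haw.ne, hab, hav, hbw.ne', hv.1.symm, hvb.ne']

lemma IsPathHub.isCFVertexConnColoring [DecidableEq V] {w : V} (hw : G.IsPathHub w) :
    IsCFVertexConnColoring G (fun x => if x = w then 1 else 0) := by
  intro u v huv
  obtain ⟨p, hp, hwp⟩ := hw u v huv
  refine ⟨p, hp, 1, ?_⟩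
  have hfilter : p.support.filter (fun x => (if x = w then 1 else 0) = 1) =
      p.support.filter (· == w) := by
    congr; funext x; by_cases hx : x = w <;> simp [hx]
  rw [hfilter, ← List.count_eq_length_filter]
  exact List.count_eq_one_of_mem hp.support_nodup hwp

end SimpleGraph

section

variable {V : Type*} {G : SimpleGraph V}

lemma IsCutVertex.adj (h : G.ediam ≤ 2) {x w : V} (hx : IsCutVertex G x) (hw : w ≠ x) :
    G.Adj x w :=
  by_contra fun hxw => hx (induce_ne_connected_of_not_adj h hw hxw)

lemma IsCutVertex.eq (h : G.ediam ≤ 2) {x y : V} (hx : IsCutVertex G x)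
    (hy : IsCutVertex G y) : x = y :=
  by_contra fun hxy => hx (induce_ne_connected_of_forall_adj (Ne.symm hxy) fun _ hz => hy.adj h hz)

lemma IsCFVertexConnColoring.exists_ne [Nontrivial V] {c : V → ℕ}
    (hc : IsCFVertexConnColoring G c) : ∃ a b, c a ≠ c b := by
  by_contra! hconst
  obtain ⟨u, v, huv⟩ := exists_pair_ne V
  obtain ⟨p, -, col, hcol⟩ := hc u v huv
  have hlen : 2 ≤ p.support.length := by
    rw [Walk.length_support]
    have := mt (Walk.eq_of_length_eq_zero (p := p)) huv
    omega
  by_cases hu : c u = col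
  · rw [List.filter_eq_self.mpr fun x _ => by simp [hconst x u, hu]] at hcol
    omega
  · rw [List.filter_eq_nil_iff.mpr fun x _ => by simp [hconst x u, hu]] at hcol
    simp at hcol

lemma two_le_of_isCFVertexConnColoring [Nontrivial V] {c : V → ℕ} {k : ℕ}
    (hc : IsCFVertexConnColoring G c) (hk : ∀ v, c v < k) : 2 ≤ k := by
  obtain ⟨a, b, hab⟩ := hc.exists_ne
  have := hk a
  have := hk b
  omega

lemma vcfConn_eq_two [Nontrivial V] {w : V} (hw : G.IsPathHub w) : vcfConn G = 2 := by
  classical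
  have hmem : 2 ∈ {k | ∃ c : V → ℕ, (∀ v, c v < k) ∧ IsCFVertexConnColoring G c} :=
    ⟨_, fun v => by split_ifs <;> omega, hw.isCFVertexConnColoring⟩
  refine le_antisymm (Nat.sInf_le hmem) (le_csInf ⟨2, hmem⟩ ?_)
  rintro k ⟨c, hk, hc⟩
  exact two_le_of_isCFVertexConnColoring hc hk

end

theorem diam_two_cutVertex_vcfConn_general {V : Type*} (G : SimpleGraph V) (hdiam : G.diam = 2) :
    (∀ x y : V, IsCutVertex G x → IsCutVertex G y → x = y) ∧ vcfConn G = 2 := by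
  have hG : G.ediam ≤ 2 := (G.ediam_eq_of_diam_eq two_ne_zero hdiam).le
  have : Nontrivial V := G.nontrivial_of_diam_ne_zero (by omega)
  refine ⟨fun x y hx hy => hx.eq hG hy, ?_⟩
  by_cases hcut : ∃ x, IsCutVertex G x
  · obtain ⟨x, hx⟩ := hcut
    exact vcfConn_eq_two (IsPathHub.of_forall_adj fun w hw => hx.adj hG hw)
  · push Not at hcut
    exact vcfConn_eq_two (IsPathHub.of_not_isCutVertex hG hcut (Classical.arbitrary V))

/-- A connected graph of diameter `2` on at least `3` vertices has at most one
cut-vertex, and consequently `vcfc(G) = 2`. -/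
theorem diam_two_cutVertex_vcfConn {V : Type*} [Fintype V] (G : SimpleGraph V)
    (hcard : 3 ≤ Fintype.card V) (hconn : G.Connected) (hdiam : G.diam = 2) :
    (∀ x y : V, IsCutVertex G x → IsCutVertex G y → x = y) ∧ vcfConn G = 2 :=
  diam_two_cutVertex_vcfConn_general G hdiam
end

section
/- If G is a connected graph of diameter 2, then the subgraph C(G) induced by the cut-edges of G is either empty or a star. -/
open SimpleGraph

/-!
If `ab` and `cd` are vertex-disjoint bridges of a connected graph, then `cd` lies on one side of
`ab` and `ab` on one side of `cd`; after relabelling the endpoints, every `a`–`d` path passes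
through `b` and then through `c`, so `dist a d ≥ 3`. Hence in diameter `2` any two bridges share
an endpoint. No bridge lies on a triangle, and a triangle-free graph whose edges pairwise meet
is a star.
-/

/-- The subgraph `C(G)` of `G` induced by the set of cut-edges (bridges). -/
def bridgeGraph {V : Type*} (G : SimpleGraph V) : SimpleGraph V :=
  SimpleGraph.fromEdgeSet {e | G.IsBridge e}

namespace SimpleGraph

variable {V : Type*} {G : SimpleGraph V} {a b c d x y z : V}

lemma dist_add_dist_le_of_forall_mem_support (hr : G.Reachable x y)
    (h : ∀ p : G.Walk x y, z ∈ p.support) : G.dist x z + G.dist z y ≤ G.dist x y := by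
  classical
  obtain ⟨p, hp⟩ := hr.exists_walk_length_eq_dist
  have hsplit := congrArg Walk.length (p.take_spec (h p))
  rw [Walk.length_append] at hsplit
  have := G.dist_le (p.takeUntil z (h p))
  have := G.dist_le (p.dropUntil z (h p))
  omega

lemma mem_edges_of_not_reachable_deleteEdges {e : Sym2 V}
    (h : ¬ (G.deleteEdges {e}).Reachable x y) (p : G.Walk x y) : e ∈ p.edges := by
  obtain ⟨u, v⟩ := e
  by_contra hp
  exact h (reachable_deleteEdges_iff_exists_walk.mpr ⟨p, hp⟩)

lemma three_le_dist_of_forall_mem_support (hconn : G.Connected) (hab : a ≠ b) (hbc : b ≠ c)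
    (hcd : c ≠ d) (hb : ∀ p : G.Walk a d, b ∈ p.support)
    (hc : ∀ p : G.Walk b d, c ∈ p.support) : 3 ≤ G.dist a d := by
  have := hconn.pos_dist_of_ne hab
  have := hconn.pos_dist_of_ne hbc
  have := hconn.pos_dist_of_ne hcd
  calc 3 ≤ G.dist a b + (G.dist b c + G.dist c d) := by omega
    _ ≤ G.dist a b + G.dist b d := by grw [dist_add_dist_le_of_forall_mem_support (hconn b d) hc]
    _ ≤ G.dist a d := dist_add_dist_le_of_forall_mem_support (hconn a d) hb

lemma exists_three_le_dist_of_isBridge_of_isBridge (hconn : G.Connected)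
    (hab : G.IsBridge s(a, b)) (hcd : G.IsBridge s(c, d))
    (hac : a ≠ c) (had : a ≠ d) (hbc : b ≠ c) (hbd : b ≠ d) :
    ∃ u v, 3 ≤ G.dist u v := by
  wlog hd : ¬ (G.deleteEdges {s(a, b)}).Reachable a d generalizing a b
  · refine this (Sym2.eq_swap ▸ hab) hbc hbd hac had ?_
    rw [Sym2.eq_swap]
    exact fun hbd' => hab ((not_not.mp hd).trans hbd'.symm)
  have hc : ¬ (G.deleteEdges {s(a, b)}).Reachable a c := by
    refine fun hac' => hd (hac'.trans (Adj.reachable ?_))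
    rw [deleteEdges_adj]
    exact ⟨hcd.reachable_iff_adj.mp (hconn c d), by simp [hac.symm, had.symm]⟩
  wlog hb : ¬ (G.deleteEdges {s(c, d)}).Reachable b d generalizing c d
  · refine this (Sym2.eq_swap ▸ hcd) had hac hbd hbc hc hd ?_
    rw [Sym2.eq_swap]
    exact fun hbc' => hcd (hbc'.symm.trans (not_not.mp hb))
  have hab' : G.Adj a b := hab.reachable_iff_adj.mp (hconn a b)
  have hcd' : G.Adj c d := hcd.reachable_iff_adj.mp (hconn c d)
  refine ⟨a, d, three_le_dist_of_forall_mem_support hconn hab'.ne hbc hcd'.ne ?_ ?_⟩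
  · exact fun p => p.snd_mem_support_of_mem_edges (mem_edges_of_not_reachable_deleteEdges hd p)
  · exact fun p => p.fst_mem_support_of_mem_edges (mem_edges_of_not_reachable_deleteEdges hb p)

lemma not_isBridge_of_adj_of_adj (hac : G.Adj a c) (hcb : G.Adj c b) : ¬ G.IsBridge s(a, b) := by
  have hca : c ≠ a := hac.ne.symm
  have hcb' : c ≠ b := hcb.ne
  have hac' : (G.deleteEdges {s(a, b)}).Adj a c := by simp [hac, hca, hcb']
  have hcb'' : (G.deleteEdges {s(a, b)}).Adj c b := by simp [hcb, hca, hcb']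
  rw [isBridge_iff, not_not]
  exact hac'.reachable.trans hcb''.reachable

lemma edgeSet_eq_empty_or_exists_forall_mem_of_cliqueFree_three {H : SimpleGraph V}
    (hmeet : ∀ ⦃a b c d⦄, H.Adj a b → H.Adj c d → a = c ∨ a = d ∨ b = c ∨ b = d)
    (hH : H.CliqueFree 3) : H.edgeSet = ∅ ∨ ∃ v, ∀ e ∈ H.edgeSet, v ∈ e := by
  rcases H.edgeSet.eq_empty_or_nonempty with hempty | ⟨⟨a, b⟩, hab⟩
  · exact .inl hempty
  right
  by_cases ha : ∀ e ∈ H.edgeSet, a ∈ e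
  · exact ⟨a, ha⟩
  push Not at ha
  obtain ⟨⟨c, d⟩, hcd, hacd⟩ := ha
  rw [mem_edgeSet] at hab hcd
  obtain ⟨d', hbd', had'⟩ : ∃ d', H.Adj b d' ∧ a ≠ d' := by
    simp only [Sym2.mem_iff, not_or] at hacd
    rcases hmeet hab hcd with h | h | rfl | rfl
    · exact absurd h hacd.1
    · exact absurd h hacd.2
    · exact ⟨d, hcd, hacd.2⟩
    · exact ⟨c, hcd.symm, hacd.1⟩
  refine ⟨b, ?_⟩
  rintro ⟨u, v⟩ huv
  by_contra hb
  rw [mem_edgeSet] at huv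
  simp only [Sym2.mem_iff, not_or] at hb
  have hau : a = u ∨ a = v := by have := hmeet hab huv; tauto
  have hd'u : d' = u ∨ d' = v := by have := hmeet hbd' huv; tauto
  have had : H.Adj a d' := by
    rcases hau with rfl | rfl <;> rcases hd'u with rfl | rfl
    exacts [absurd rfl had', huv, huv.symm, absurd rfl had']
  classical
  exact hH {a, b, d'} (is3Clique_triple_iff.mpr ⟨hab, had, hbd'⟩)

end SimpleGraph

section

variable {V : Type*} {G : SimpleGraph V}

lemma bridgeGraph_adj {u v : V} : (bridgeGraph G).Adj u v ↔ G.IsBridge s(u, v) := by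
  rw [bridgeGraph, fromEdgeSet_adj, Set.mem_ofPred_eq, and_iff_left_iff_imp]
  rintro hb rfl
  exact hb (Reachable.refl u)

lemma bridgeGraph_cliqueFree_three (hconn : G.Connected) : (bridgeGraph G).CliqueFree 3 := by
  classical
  intro s hs
  obtain ⟨a, b, c, hab, hac, hbc, -⟩ := is3Clique_iff.mp hs
  rw [bridgeGraph_adj] at hab hac hbc
  exact not_isBridge_of_adj_of_adj (hac.reachable_iff_adj.mp (hconn a c))
    (hbc.reachable_iff_adj.mp (hconn b c)).symm hab

end

theorem bridgeGraph_star_of_diam_two_general {V : Type*} (G : SimpleGraph V)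
    (hconn : G.Connected) (hdiam : G.diam = 2) :
    (bridgeGraph G).edgeSet = ∅ ∨
      ∃ center : V, ∀ e ∈ (bridgeGraph G).edgeSet, center ∈ e := by
  have hdist (u v : V) : G.dist u v ≤ 2 :=
    hdiam ▸ G.dist_le_diam (G.ediam_ne_top_of_diam_ne_zero (by omega))
  refine edgeSet_eq_empty_or_exists_forall_mem_of_cliqueFree_three (fun a b c d hab hcd => ?_)
    (bridgeGraph_cliqueFree_three hconn)
  rw [bridgeGraph_adj] at hab hcd
  by_contra! hne
  obtain ⟨u, v, huv⟩ :=
    exists_three_le_dist_of_isBridge_of_isBridge hconn hab hcd hne.1 hne.2.1 hne.2.2.1 hne.2.2.2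
  have := hdist u v
  omega

/-- If `G` is a connected graph of diameter `2`, then the subgraph induced by the
cut-edges of `G` is empty or a star (all its edges share a common vertex). -/
theorem bridgeGraph_star_of_diam_two {V : Type*} [Fintype V] (G : SimpleGraph V)
    (hconn : G.Connected) (hdiam : G.diam = 2) :
    (bridgeGraph G).edgeSet = ∅ ∨
      ∃ center : V, ∀ e ∈ (bridgeGraph G).edgeSet, center ∈ e :=
  bridgeGraph_star_of_diam_two_general G hconn hdiam
end

section
/- For a connected graph G of diameter 3, vcfc(G) ≤ 3. -/
/-!
Colour each vertex by its distance from a fixed root `r`, folding distance `3` onto colour `1`;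
then `r` is the only vertex of colour `0`. For `u ≠ v`, let `x` be the first vertex of a
geodesic from `u` to `r` that lies on a geodesic from `v` to `r`. Joining the two geodesics at `x`
gives a `u`–`v` path on which every vertex other than `x` is strictly farther from `r` than `x`,
so the colour of `x` is unique unless `x` is a neighbour of `r` and the path reaches distance `3`.
In that case `r` has eccentricity `3`; choosing `r` of eccentricity `2` whenever possible, every
vertex, in particular `x`, then has eccentricity `3`, so `G - x` is still connected. A walk from
`r` to the path avoiding `x`, cut at its first hit, reroutes the path through `r`, whose colour
is unique.
-/

open SimpleGraph

theorem List.exists_filter_length_eq_one {α : Type*} {l : List α} (hl : l.Nodup) (c : α → ℕ)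
    {x : α} (hx : x ∈ l) (h : ∀ y ∈ l, c y = c x → y = x) :
    ∃ col, (l.filter fun y => c y = col).length = 1 := by
  classical
  refine ⟨c x, ?_⟩
  have : (l.filter fun y => c y = c x).toFinset = {x} := by
    ext y
    simp only [List.mem_toFinset, List.mem_filter, decide_eq_true_eq, Finset.mem_singleton]
    exact ⟨fun hy => h y hy.1 hy.2, by rintro rfl; exact ⟨hx, rfl⟩⟩
  rw [← List.toFinset_card_of_nodup (hl.filter _), this, Finset.card_singleton]

namespace SimpleGraph

variable {V : Type*} {G : SimpleGraph V}

namespace Walk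

theorem IsPath.append {u v w : V} {p : G.Walk u v} {q : G.Walk v w} (hp : p.IsPath)
    (hq : q.IsPath) (h : ∀ y ∈ p.support, y ∈ q.support → y = v) : (p.append q).IsPath := by
  have hq' := hq.support_nodup
  rw [← cons_tail_support, List.nodup_cons] at hq'
  rw [isPath_def, support_append]
  refine hp.support_nodup.append hq'.2 fun y hyp hyq => ?_
  rw [h y hyp (List.mem_of_mem_tail hyq)] at hyq
  exact hq'.1 hyq

theorem dist_lt_of_mem_support_takeUntil [DecidableEq V] {u w x y : V} {p : G.Walk u w}
    (hp : p.length = G.dist u w) (hx : x ∈ p.support) (hy : y ∈ (p.takeUntil x hx).support)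
    (hyx : y ≠ x) : G.dist x w < G.dist y w := by
  set q := (p.takeUntil x hx).dropUntil y hy
  have hsplit : p = ((p.takeUntil x hx).takeUntil y hy).append (q.append (p.dropUntil x hx)) := by
    rw [append_assoc, take_spec, take_spec]
  have hyw := length_eq_dist_of_subwalk hp (isSubwalk_of_append_right hsplit)
  have hxw := length_eq_dist_of_subwalk hp (isSubwalk_of_append_right (p.take_spec hx).symm)
  have hq : q.length ≠ 0 := fun h => hyx (eq_of_length_eq_zero h)
  rw [length_append] at hyw
  omega

theorem notMem_support_of_length_eq_dist {a t x : V} {p : G.Walk a t}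
    (hp : p.length = G.dist a t) (hxa : x ≠ a) (h : G.dist a t ≤ G.dist x t) :
    x ∉ p.support := by
  classical
  intro hx
  exact (h.trans_lt (dist_lt_of_mem_support_takeUntil hp hx (start_mem_support _) hxa.symm)).false

end Walk

theorem exists_walk_notMem_support_of_forall_dist_le (hconn : G.Connected) {a b x t : V}
    (ht : ∀ y, G.dist y t ≤ G.dist x t) (ha : a ≠ x) (hb : b ≠ x) :
    ∃ S : G.Walk a b, x ∉ S.support := by
  classical
  obtain ⟨p, hp⟩ := hconn.exists_walk_length_eq_dist a t
  obtain ⟨q, hq⟩ := hconn.exists_walk_length_eq_dist b t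
  refine ⟨p.append q.reverse, fun hx => ?_⟩
  rw [Walk.mem_support_append_iff, Walk.support_reverse, List.mem_reverse] at hx
  exact hx.elim (Walk.notMem_support_of_length_eq_dist hp ha.symm (ht a))
    (Walk.notMem_support_of_length_eq_dist hq hb.symm (ht b))

theorem exists_isPath_mem_support_of_mem_left {u v x r z : V} {P : G.Walk u x}
    {Q : G.Walk v x} (hP : P.IsPath) (hQ : Q.IsPath)
    (hPQ : ∀ y ∈ P.support, y ∈ Q.support → y = x) (hrQ : r ∉ Q.support) (hxr : G.Adj x r)
    {T : G.Walk r z} (hT : T.IsPath)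
    (hzP : z ∈ P.support) (hzx : z ≠ x)
    (hTPQ : ∀ y ∈ T.support, y ∈ P.support ∨ y ∈ Q.support → y = z) :
    ∃ p : G.Walk u v, p.IsPath ∧ r ∈ p.support := by
  classical
  set Pu := (P.takeUntil z hzP).append T.reverse
  set Pv := Walk.cons hxr.symm Q.reverse
  have hxPz : x ∉ (P.takeUntil z hzP).support :=
    Walk.endpoint_notMem_support_takeUntil hP hzP hzx.symm
  have hPu : Pu.IsPath := (hP.takeUntil hzP).append hT.reverse fun y hyP hyT => by
    rw [Walk.support_reverse, List.mem_reverse] at hyT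
    exact hTPQ y hyT (Or.inl (Walk.support_takeUntil_subset_support _ _ hyP))
  have hPv : Pv.IsPath := hQ.reverse.cons (by simpa using hrQ)
  refine ⟨Pu.append Pv, hPu.append hPv fun y hyu hyv => ?_, by simp [Pu]⟩
  simp only [Pv, Pu, Walk.support_cons, Walk.support_reverse, List.mem_cons, List.mem_reverse,
    Walk.mem_support_append_iff] at hyu hyv
  obtain rfl | hyQ := hyv
  · rfl
  obtain hyP | hyT := hyu
  · exact absurd (hPQ y (Walk.support_takeUntil_subset_support _ _ hyP) hyQ ▸ hyP) hxPz
  · have hyz := hTPQ y hyT (Or.inr hyQ)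
    subst hyz
    exact absurd (hPQ y hzP hyQ) hzx

theorem exists_isPath_mem_support {u v x r w : V} {P : G.Walk u x} {Q : G.Walk v x}
    (hP : P.IsPath) (hQ : Q.IsPath) (hPQ : ∀ y ∈ P.support, y ∈ Q.support → y = x)
    (hrP : r ∉ P.support) (hrQ : r ∉ Q.support) (hxr : G.Adj x r) (S : G.Walk r w)
    (hw : w ∈ P.support ∨ w ∈ Q.support) (hxS : x ∉ S.support) :
    ∃ p : G.Walk u v, p.IsPath ∧ r ∈ p.support := by
  classical
  set B := S.bypass
  obtain ⟨z, hzs, hzB, hfirst⟩ := B.exists_mem_support_forall_mem_support_imp_eq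
    (P.support.toFinset ∪ Q.support.toFinset) ⟨w, by simpa [B] using hw⟩
  set T := B.takeUntil z hzB
  have hTS : ∀ y ∈ T.support, y ∈ S.support := fun y hy =>
    S.support_bypass_subset_support (B.support_takeUntil_subset_support hzB hy)
  have hzx : z ≠ x := fun h => hxS (h ▸ hTS z T.end_mem_support)
  have hT : T.IsPath := S.bypass_isPath.takeUntil hzB
  have hTPQ : ∀ y ∈ T.support, y ∈ P.support ∨ y ∈ Q.support → y = z := fun y hy hyPQ =>
    hfirst y (by simpa using hyPQ) hy
  simp only [Finset.mem_union, List.mem_toFinset] at hzs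
  obtain hzP | hzQ := hzs
  · exact exists_isPath_mem_support_of_mem_left hP hQ hPQ hrQ hxr hT hzP hzx hTPQ
  · obtain ⟨p, hp, hrp⟩ := exists_isPath_mem_support_of_mem_left hQ hP
      (fun y hyQ hyP => hPQ y hyP hyQ) hrP hxr hT hzQ hzx fun y hy hyPQ => hTPQ y hy hyPQ.symm
    exact ⟨p.reverse, hp.reverse, by simpa using hrp⟩

theorem exists_isPath_to_common_vertex (hconn : G.Connected) (u v r : V) :
    ∃ (x : V) (P : G.Walk u x) (Q : G.Walk v x), P.IsPath ∧ Q.IsPath ∧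
      (∀ y ∈ P.support, y ∈ Q.support → y = x) ∧
      ∀ y, y ∈ P.support ∨ y ∈ Q.support → y ≠ x → G.dist r x < G.dist r y := by
  classical
  obtain ⟨Bu, hBu, hBu'⟩ := hconn.exists_path_of_dist u r
  obtain ⟨Bv, hBv, hBv'⟩ := hconn.exists_path_of_dist v r
  obtain ⟨x, hxBv, hxBu, hfirst⟩ :=
    Bu.exists_mem_support_forall_mem_support_imp_eq Bv.support.toFinset ⟨r, by simp⟩
  rw [List.mem_toFinset] at hxBv
  refine ⟨x, Bu.takeUntil x hxBu, Bv.takeUntil x hxBv, hBu.takeUntil _, hBv.takeUntil _,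
    fun y hyP hyQ => hfirst y (List.mem_toFinset.2 (Bv.support_takeUntil_subset_support _ hyQ)) hyP,
    fun y hy hyx => ?_⟩
  rw [dist_comm, dist_comm (u := r)]
  exact hy.elim (Walk.dist_lt_of_mem_support_takeUntil hBu' hxBu · hyx)
    (Walk.dist_lt_of_mem_support_takeUntil hBv' hxBv · hyx)

noncomputable def distColoring (G : SimpleGraph V) (r x : V) : ℕ :=
  if G.dist r x = 3 then 1 else G.dist r x

theorem distColoring_eq_zero_iff (hconn : G.Connected) {r x : V} :
    G.distColoring r x = 0 ↔ x = r := by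
  rw [eq_comm.trans hconn.dist_eq_zero_iff.symm, distColoring]
  split_ifs with h <;> simp [h]

theorem isCFVertexConnColoring_distColoring (hconn : G.Connected)
    (hd : ∀ a b, G.dist a b ≤ 3) {r : V}
    (hr : (∃ y, G.dist r y = 3) → ∀ x, ∃ t, G.dist x t = 3) :
    IsCFVertexConnColoring G (G.distColoring r) := by
  classical
  intro u v _
  obtain ⟨x, P, Q, hP, hQ, hPQ, hfar⟩ := exists_isPath_to_common_vertex hconn u v r
  set W := P.append Q.reverse
  have hW : W.IsPath := hP.append hQ.reverse fun y hyP hyQ => hPQ y hyP (by simpa using hyQ)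
  by_cases hxW : ∀ y ∈ W.support, G.distColoring r y = G.distColoring r x → y = x
  · exact ⟨W, hW, List.exists_filter_length_eq_one hW.support_nodup _ (by simp [W]) hxW⟩
  push Not at hxW
  obtain ⟨y, hyW, hcy, hyx⟩ := hxW
  have hyPQ : y ∈ P.support ∨ y ∈ Q.support := by simpa [W] using hyW
  obtain ⟨hx1, hy3⟩ : G.dist r x = 1 ∧ G.dist r y = 3 := by
    have := hfar y hyPQ hyx
    have := hd r y
    unfold distColoring at hcy
    split_ifs at hcy <;> omega
  obtain ⟨t, ht⟩ := hr ⟨y, hy3⟩ x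
  have hxr : G.Adj x r := G.dist_eq_one_iff_adj.mp (dist_comm ▸ hx1)
  obtain ⟨S, hxS⟩ := exists_walk_notMem_support_of_forall_dist_le hconn (t := t)
    (fun z => ht ▸ hd z t) hxr.ne.symm hyx
  have hrPQ : ∀ z, z ∈ P.support ∨ z ∈ Q.support → z ≠ r := by
    rintro z hz rfl
    simpa using hfar z hz hxr.ne.symm
  obtain ⟨p, hp, hrp⟩ := exists_isPath_mem_support hP hQ hPQ (fun h => hrPQ r (Or.inl h) rfl)
    (fun h => hrPQ r (Or.inr h) rfl) hxr S hyPQ hxS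
  refine ⟨p, hp, List.exists_filter_length_eq_one hp.support_nodup _ hrp fun z _ hz => ?_⟩
  rwa [distColoring_eq_zero_iff hconn |>.2 rfl, distColoring_eq_zero_iff hconn] at hz

end SimpleGraph

theorem vcfConn_le_three_of_diam_three_general {V : Type*} (G : SimpleGraph V)
    (hconn : G.Connected) (hdiam : G.diam = 3) : vcfConn G ≤ 3 := by
  have hd : ∀ a b, G.dist a b ≤ 3 := fun a b =>
    hdiam ▸ dist_le_diam (ediam_ne_top_of_diam_ne_zero (by omega))
  obtain ⟨r, hr⟩ : ∃ r : V, (∃ y, G.dist r y = 3) → ∀ x, ∃ t, G.dist x t = 3 := by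
    by_cases h : ∀ x, ∃ t, G.dist x t = 3
    · exact ⟨hconn.nonempty.some, fun _ => h⟩
    · push Not at h
      obtain ⟨r, hr⟩ := h
      exact ⟨r, fun ⟨y, hy⟩ => absurd hy (hr y)⟩
  refine Nat.sInf_le
    ⟨G.distColoring r, fun x => ?_, isCFVertexConnColoring_distColoring hconn hd hr⟩
  have := hd r x
  unfold distColoring
  split_ifs <;> omega

/-- For a connected graph `G` of diameter `3`, `vcfc(G) ≤ 3`. -/
theorem vcfConn_le_three_of_diam_three {V : Type*} [Fintype V] (G : SimpleGraph V)
    (hconn : G.Connected) (hdiam : G.diam = 3) : vcfConn G ≤ 3 :=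
  vcfConn_le_three_of_diam_three_general G hconn hdiam
end

section
/- For a connected graph G of diameter 4, vcfc(G) ≤ 3. -/
open SimpleGraph

/-!
Colour a central vertex `r` with `2` and every other vertex with the parity of its distance
from `r`. On an `x`–`y` path through `r` the colour `2` occurs once. If there is no such path,
a single vertex `w ≠ r` lies on every walk from `x` or from `y` to `r`. As `r` is central, the
farthest vertex from `w` lies beyond `w` as seen from `x`, which forces `2 d(x, w) < diam G ≤ 4`;
so `x` and `y` are `w` or neighbours of `w`, one step farther from `r`, and on the path
`x w y` (or the edge `x y`) some parity occurs once.
-/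

namespace SimpleGraph.Walk

variable {V : Type*} {G : SimpleGraph V}

theorem isPath_append_iff {u v w : V} {p : G.Walk u v} {q : G.Walk v w} :
    (p.append q).IsPath ↔ p.IsPath ∧ q.IsPath ∧ ∀ x ∈ p.support, x ∈ q.support → x = v := by
  have hq : q.support = v :: q.support.tail := q.cons_tail_support.symm
  simp only [isPath_def, support_append]
  constructor
  · intro h
    refine ⟨h.sublist (List.sublist_append_left _ _), ?_, fun x hxp hxq => ?_⟩
    · rw [hq, List.nodup_cons]
      refine ⟨fun hv => ?_, h.sublist (List.sublist_append_right _ _)⟩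
      exact List.disjoint_of_nodup_append h p.end_mem_support hv
    · rw [hq, List.mem_cons] at hxq
      exact hxq.resolve_right (List.disjoint_of_nodup_append h hxp)
  · rintro ⟨hp, hq', hpq⟩
    rw [hq, List.nodup_cons] at hq'
    refine List.nodup_append.mpr ⟨hp, hq'.2, fun x hxp y hyq hxy => ?_⟩
    subst hxy
    exact hq'.1 (hpq x hxp (hq ▸ List.mem_cons_of_mem _ hyq) ▸ hyq)

theorem exists_isPath_to_first_mem {u v : V} (p : G.Walk u v) {S : Set V} (hv : v ∈ S) :
    ∃ c ∈ S, ∃ q : G.Walk u c, q.IsPath ∧ q.support ⊆ p.support ∧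
      ∀ x ∈ q.support, x ∈ S → x = c := by
  classical
  suffices ∃ c ∈ S, ∃ q : G.Walk u c, q.support ⊆ p.support ∧
      ∀ x ∈ q.support, x ∈ S → x = c by
    obtain ⟨c, hc, q, hqp, hqS⟩ := this
    exact ⟨c, hc, q.bypass, q.bypass_isPath, List.Subset.trans q.support_bypass_subset_support hqp,
      fun x hx => hqS x (q.support_bypass_subset_support hx)⟩
  induction p with
  | nil => exact ⟨_, hv, nil, by simp⟩
  | @cons a b _ hab p ih =>
    by_cases ha : a ∈ S
    · exact ⟨a, ha, nil, by simp⟩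
    obtain ⟨c, hc, q, hqp, hqS⟩ := ih hv
    refine ⟨c, hc, cons hab q, ?_, ?_⟩
    · simpa using List.cons_subset_cons a hqp
    · simp only [support_cons, List.mem_cons, forall_eq_or_imp]
      exact ⟨fun h => absurd h ha, hqS⟩

theorem exists_append_append_of_mem {x y u w : V} (p : G.Walk x y) (hu : u ∈ p.support)
    (hw : w ∈ p.support) :
    (∃ (A : G.Walk x u) (B : G.Walk u w) (C : G.Walk w y), p = A.append (B.append C)) ∨
      ∃ (A : G.Walk x w) (B : G.Walk w u) (C : G.Walk u y), p = A.append (B.append C) := by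
  obtain ⟨A, D, rfl⟩ := mem_support_iff_exists_append.mp hu
  rcases (mem_support_append_iff A D).mp hw with hwA | hwD
  · obtain ⟨A₁, A₂, rfl⟩ := mem_support_iff_exists_append.mp hwA
    exact Or.inr ⟨A₁, A₂, D, (append_assoc _ _ _).symm⟩
  · obtain ⟨D₁, D₂, rfl⟩ := mem_support_iff_exists_append.mp hwD
    exact Or.inl ⟨A, D₁, D₂, rfl⟩

theorem IsPath.append_append_of_disjoint {x y u w : V} {A : G.Walk x u} {B E : G.Walk u w}
    {C : G.Walk w y} (h : (A.append (B.append C)).IsPath) (hE : E.IsPath) (huw : u ≠ w)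
    (hEW : ∀ v ∈ E.support, v ∈ A.support ∨ v ∈ C.support → v = u ∨ v = w) :
    (A.append (E.append C)).IsPath := by
  obtain ⟨hA, hBC, hABC⟩ := isPath_append_iff.mp h
  obtain ⟨-, hC, hBC'⟩ := isPath_append_iff.mp hBC
  refine isPath_append_iff.mpr ⟨hA, isPath_append_iff.mpr ⟨hE, hC, fun v hvE hvC => ?_⟩,
    fun v hvA hvEC => ?_⟩
  · rcases hEW v hvE (Or.inr hvC) with rfl | rfl
    · exact absurd (hBC' v B.start_mem_support hvC) huw
    · rfl
  · rcases (mem_support_append_iff E C).mp hvEC with hvE | hvC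
    · rcases hEW v hvE (Or.inl hvA) with rfl | rfl
      · rfl
      · exact absurd (hABC v hvA (by simp)).symm huw
    · exact hABC v hvA (by simp [hvC])

theorem IsPath.exists_isPath_through_ear {x y u w : V} {W : G.Walk x y}
    (hW : W.IsPath) (hu : u ∈ W.support) (hw : w ∈ W.support) (huw : u ≠ w) {E : G.Walk u w}
    (hE : E.IsPath) (hEW : ∀ v ∈ E.support, v ∈ W.support → v = u ∨ v = w) :
    ∃ p : G.Walk x y, p.IsPath ∧ E.support ⊆ p.support := by
  rcases W.exists_append_append_of_mem hu hw with ⟨A, B, C, rfl⟩ | ⟨A, B, C, rfl⟩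
  · refine ⟨A.append (E.append C), hW.append_append_of_disjoint hE huw fun v hvE hv => ?_,
      fun v hv => by simp [hv]⟩
    exact hEW v hvE (by rcases hv with hv | hv <;> simp [hv])
  · refine ⟨A.append (E.reverse.append C),
      hW.append_append_of_disjoint hE.reverse huw.symm fun v hvE hv => ?_,
      fun v hv => by simp [hv]⟩
    rw [support_reverse, List.mem_reverse] at hvE
    exact (hEW v hvE (by rcases hv with hv | hv <;> simp [hv])).symm

end SimpleGraph.Walk

namespace SimpleGraph

variable {V : Type*} {G : SimpleGraph V}

def Separates (G : SimpleGraph V) (w a b : V) : Prop :=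
  ∀ p : G.Walk a b, w ∈ p.support

open Walk in
/-- A local form of the fan lemma (Menger's theorem for two paths).

Let `U` be the set of vertices on `x`–`y` paths and `w` the first vertex of `U` on a path `R`
from `r`. A walk to `r` from a vertex of an `x`–`y` path `W` through `w` that avoided `w` would
yield an ear of `W` containing a vertex of `R` other than `w`; that vertex would then lie in `U`. -/
theorem exists_isPath_mem_support_or_separates (hG : G.Preconnected) (x y r : V) :
    (∃ p : G.Walk x y, p.IsPath ∧ r ∈ p.support) ∨
      ∃ w ≠ r, G.Separates w x r ∧ G.Separates w y r := by
  classical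
  set U : Set V := {v | ∃ p : G.Walk x y, p.IsPath ∧ v ∈ p.support}
  by_cases hrU : r ∈ U
  · exact Or.inl hrU
  right
  have hxU : x ∈ U := ⟨(hG x y).some.bypass, bypass_isPath _, start_mem_support _⟩
  obtain ⟨w, hwU, R, hR, -, hRU⟩ := (hG r x).some.exists_isPath_to_first_mem hxU
  obtain ⟨W, hW, hwW⟩ := hwU
  have hwr : w ≠ r := fun h => hrU (h ▸ ⟨W, hW, hwW⟩)
  suffices key : ∀ a ∈ W.support, G.Separates w a r from
    ⟨w, hwr, key x W.start_mem_support, key y W.end_mem_support⟩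
  intro a ha X
  by_contra hwX
  obtain ⟨z, hzR, q₁, -, hq₁X, hq₁R⟩ := X.exists_isPath_to_first_mem (S := {v | v ∈ R.support})
    R.start_mem_support
  obtain ⟨u, huW, q₂, hq₂, hq₂q₁, hq₂W⟩ :=
    q₁.reverse.exists_isPath_to_first_mem (S := {v | v ∈ W.support}) (by simpa using ha)
  have hq₂X : q₂.support ⊆ X.support := fun v hv => hq₁X (by simpa using hq₂q₁ hv)
  have hzw : z ≠ w := fun h => hwX (h ▸ hq₁X q₁.end_mem_support)
  have huw : u ≠ w := fun h => hwX (h ▸ hq₂X q₂.end_mem_support)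
  have hzR' : z ∈ R.reverse.support := by simpa using hzR
  set E := (R.reverse.takeUntil z hzR').append q₂ with hE
  have hER : ∀ v ∈ (R.reverse.takeUntil z hzR').support, v ∈ R.support := fun v hv => by
    simpa using R.reverse.support_takeUntil_subset_support hzR' hv
  have hEpath : E.IsPath := isPath_append_iff.mpr ⟨hR.reverse.takeUntil hzR', hq₂,
    fun v hv hv₂ => hq₁R v (by simpa using hq₂q₁ hv₂) (hER v hv)⟩
  obtain ⟨p, hp, hEp⟩ := hW.exists_isPath_through_ear hwW huW huw.symm hEpath
    fun v hvE hvW => by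
      rcases (mem_support_append_iff _ _).mp hvE with hv | hv
      · exact Or.inl (hRU v (hER v hv) ⟨W, hW, hvW⟩)
      · exact Or.inr (hq₂W v hv hvW)
  exact hzw (hRU z hzR ⟨p, hp, hEp (by simp [hE])⟩)

variable {w a b : V}

theorem Separates.dist_eq_add (hG : G.Connected) (h : G.Separates w a b) :
    G.dist a b = G.dist a w + G.dist w b := by
  obtain ⟨p, -, hp⟩ := hG.exists_path_of_dist a b
  obtain ⟨q, q', rfl⟩ := Walk.mem_support_iff_exists_append.mp (h p)
  refine le_antisymm hG.dist_triangle ?_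
  calc G.dist a w + G.dist w b ≤ q.length + q'.length := add_le_add (dist_le _) (dist_le _)
    _ = G.dist a b := by rw [← Walk.length_append, hp]

theorem Separates.of_not_separates {t : V} (h : G.Separates w a b) (ht : ¬ G.Separates w t b) :
    G.Separates w a t := by
  classical
  intro p
  obtain ⟨q, hq⟩ : ∃ q : G.Walk t b, w ∉ q.support := by simpa [Separates] using ht
  simpa [hq] using h (p.append q)

theorem Separates.ne_of_ne (h : G.Separates w a b) (hwb : w ≠ b) : a ≠ b := by
  rintro rfl
  simpa [hwb] using h Walk.nil

theorem exists_forall_dist_le_of_mem_center (hG : G.Connected) (hfin : G.ediam ≠ ⊤)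
    {r : V} (hr : r ∈ G.center) (w : V) : ∃ t, ∀ v, G.dist r v ≤ G.dist w t := by
  have := hG.nonempty
  obtain ⟨t, ht⟩ : ∃ t, G.edist w t = G.eccent w :=
    ENat.exists_eq_iSup_of_lt_top (eccent_le_ediam.trans_lt hfin.lt_top)
  refine ⟨t, fun v => ?_⟩
  have : (G.dist r v : ℕ∞) ≤ G.dist w t := by
    rw [(hG r v).coe_dist_eq_edist, (hG w t).coe_dist_eq_edist, ht]
    exact edist_le_eccent.trans (hr.trans_le radius_le_eccent)
  exact_mod_cast this

theorem two_mul_dist_lt_diam_of_separates (hG : G.Connected) (hfin : G.ediam ≠ ⊤) {r z : V}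
    (hr : r ∈ G.center) (hwr : w ≠ r) (hz : G.Separates w z r) : 2 * G.dist z w < G.diam := by
  obtain ⟨t, ht⟩ := exists_forall_dist_le_of_mem_center hG hfin hr w
  have hwr' : 0 < G.dist w r := hG.pos_dist_of_ne hwr
  have htr : ¬ G.Separates w t r := fun htr => by
    have hsum := htr.dist_eq_add hG
    have hfar := ht t
    rw [dist_comm (u := r), dist_comm (u := w)] at hfar
    omega
  have hzt := (hz.of_not_separates htr).dist_eq_add hG
  have hzr := hz.dist_eq_add hG
  have hdiam := G.dist_le_diam hfin (u := z) (v := t)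
  have hfar := ht z
  rw [dist_comm (u := r)] at hfar
  omega

open Classical in
noncomputable def parityColoring (G : SimpleGraph V) (r : V) (v : V) : ℕ :=
  if v = r then 2 else G.dist r v % 2

theorem parityColoring_lt_three (r v : V) : G.parityColoring r v < 3 := by
  unfold parityColoring; split_ifs <;> omega

theorem parityColoring_ne_of_adj_of_separates (hG : G.Connected) {r z : V} (hwr : w ≠ r)
    (hz : G.Separates w z r) (hzw : G.Adj z w) : G.parityColoring r z ≠ G.parityColoring r w := by
  have hzr := hz.dist_eq_add hG
  rw [(dist_eq_one_iff_adj).mpr hzw, dist_comm, dist_comm (u := w)] at hzr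
  simp only [parityColoring, hwr, hz.ne_of_ne hwr, if_false]
  omega

def Walk.IsConflictFree {u v : V} (c : V → ℕ) (p : G.Walk u v) : Prop :=
  ∃ col : ℕ, (p.support.filter (fun x => c x = col)).length = 1

theorem Walk.IsPath.isConflictFree_of_unique {c : V → ℕ} {u v a : V} {p : G.Walk u v}
    (hp : p.IsPath) (ha : a ∈ p.support) (hc : ∀ b ∈ p.support, c b = c a → b = a) :
    p.IsConflictFree c := by
  classical
  refine ⟨c a, ?_⟩
  rw [List.filter_congr (q := fun x => x == a) fun b hb => by
    by_cases h : b = a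
    · simp [h]
    · simp [h, mt (hc b hb) h]]
  rw [← List.count_eq_length_filter]
  exact List.count_eq_one_of_mem hp.support_nodup ha

theorem Adj.isConflictFree_toWalk {c : V → ℕ} {x y : V} (h : G.Adj x y) (hc : c x ≠ c y) :
    h.toWalk.IsConflictFree c :=
  h.isPath_toWalk.isConflictFree_of_unique (a := x) (by simp [Adj.toWalk]) fun b hb hbx => by
    simp only [Adj.toWalk, Walk.support_cons, Walk.support_nil, List.mem_cons] at hb
    grind

theorem exists_isPath_isConflictFree_of_adj_adj {c : V → ℕ} {x w y : V} (hxw : G.Adj x w)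
    (hwy : G.Adj w y) (hxy : x ≠ y) (hx : c x ≠ c w) (hy : c y ≠ c w) :
    ∃ p : G.Walk x y, p.IsPath ∧ p.IsConflictFree c := by
  have hp : (Walk.cons hxw hwy.toWalk).IsPath := by
    simp [Adj.toWalk, hxy, hxw.ne, hwy.ne]
  exact ⟨_, hp, hp.isConflictFree_of_unique (a := w) (by simp [Adj.toWalk]) fun b hb hbw => by
    simp only [Adj.toWalk, Walk.support_cons, Walk.support_nil, List.mem_cons] at hb
    grind⟩

theorem isCFVertexConnColoring_parityColoring (hG : G.Connected) (hfin : G.ediam ≠ ⊤)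
    (hdiam : G.diam ≤ 4) {r : V} (hr : r ∈ G.center) :
    IsCFVertexConnColoring G (G.parityColoring r) := by
  intro x y hxy
  rcases exists_isPath_mem_support_or_separates hG.preconnected x y r with
    ⟨p, hp, hrp⟩ | ⟨w, hwr, hx, hy⟩
  · refine ⟨p, hp, hp.isConflictFree_of_unique hrp fun b _ hb => ?_⟩
    by_contra hbr
    simp only [parityColoring, hbr, if_false, if_true] at hb
    omega
  have adj_of_near : ∀ {a}, G.Separates w a r → a ≠ w → G.Adj a w := fun ha haw => by
    have := two_mul_dist_lt_diam_of_separates hG hfin hr hwr ha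
    have := hG.pos_dist_of_ne haw
    exact dist_eq_one_iff_adj.mp (by omega)
  have hcol : ∀ {a}, G.Separates w a r → a ≠ w →
      G.parityColoring r a ≠ G.parityColoring r w := fun ha haw =>
    parityColoring_ne_of_adj_of_separates hG hwr ha (adj_of_near ha haw)
  by_cases hxw : x = w
  · subst hxw
    have hyx := adj_of_near hy (Ne.symm hxy)
    exact ⟨_, hyx.symm.isPath_toWalk, hyx.symm.isConflictFree_toWalk (hcol hy hxy.symm).symm⟩
  by_cases hyw : y = w
  · subst hyw
    have hxy' := adj_of_near hx hxy
    exact ⟨_, hxy'.isPath_toWalk, hxy'.isConflictFree_toWalk (hcol hx hxw)⟩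
  exact exists_isPath_isConflictFree_of_adj_adj (adj_of_near hx hxw) (adj_of_near hy hyw).symm
    hxy (hcol hx hxw) (hcol hy hyw)

end SimpleGraph

theorem vcfConn_le_three_of_diam_four_general {V : Type*} (G : SimpleGraph V)
    (hconn : G.Connected) (hdiam : G.diam = 4) : vcfConn G ≤ 3 := by
  have hfin : G.ediam ≠ ⊤ := ediam_ne_top_of_diam_ne_zero (by omega)
  have := hconn.nonempty
  obtain ⟨r, hr⟩ := G.center_nonempty
  exact Nat.sInf_le ⟨G.parityColoring r, parityColoring_lt_three r,
    isCFVertexConnColoring_parityColoring hconn hfin hdiam.le hr⟩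

/-- For a connected graph `G` of diameter `4`, `vcfc(G) ≤ 3`. -/
theorem vcfConn_le_three_of_diam_four {V : Type*} [Fintype V] (G : SimpleGraph V)
    (hconn : G.Connected) (hdiam : G.diam = 4) : vcfConn G ≤ 3 :=
  vcfConn_le_three_of_diam_four_general G hconn hdiam
end
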